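/- For t ∈ ℝ let Ψ(t) be the 2×2 complex matrix (rows indexed by α ∈ {0,1}, columns by {+,−}) with Ψ(t)₀₊ = exp(-t/4)/√2, Ψ(t)₀₋ = −i·exp(-t/4)/√2, Ψ(t)₁₊ = exp(t/4)/√2, Ψ(t)₁₋ = i·exp(t/4)/√2; let U(t) be the diagonal matrix diag(2·exp(t/2), −2·exp(t/2)); and let R₁(t) = (1/16)·exp(-t/2)·[[−1, 2i],[2i, 1]]. Then for all t: (i) Ψ(t)⁻¹·Ψ'(t) = (1/4)·[[0, i],[−i, 0]]; (ii) Ψ(t)⁻¹·Ψ'(t) = [U'(t), R₁(t)] (matrix commutator); and (iii) the two diagonal entries of R₁'(t) + Ψ(t)⁻¹·Ψ'(t)·R₁(t) vanish. -/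

import Mathlib

open Complex

/-- The transition matrix `Ψ(t)` from the flat basis to the normalized
idempotent basis of the quantum cohomology of ℙ¹ (rows indexed by `α ∈ {0,1}`,
columns by `{+,−}` as `{0,1}`). -/
noncomputable def PsiM (t : ℝ) : Matrix (Fin 2) (Fin 2) ℂ :=
  !![((Real.exp (-t / 4) / Real.sqrt 2 : ℝ) : ℂ),
       -Complex.I * ((Real.exp (-t / 4) / Real.sqrt 2 : ℝ) : ℂ);
     ((Real.exp (t / 4) / Real.sqrt 2 : ℝ) : ℂ),
       Complex.I * ((Real.exp (t / 4) / Real.sqrt 2 : ℝ) : ℂ)]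

/-- `U(t) = diag(2·exp(t/2), −2·exp(t/2))`, the diagonal matrix of canonical
coordinates (only its derivative enters). -/
noncomputable def UM (t : ℝ) : Matrix (Fin 2) (Fin 2) ℂ :=
  !![((2 * Real.exp (t / 2) : ℝ) : ℂ), 0;
     0, -((2 * Real.exp (t / 2) : ℝ) : ℂ)]

/-- `R₁(t) = (1/16)·exp(-t/2)·[[−1, 2i],[2i, 1]]`. -/
noncomputable def R1M (t : ℝ) : Matrix (Fin 2) (Fin 2) ℂ :=
  (((Real.exp (-t / 2) : ℝ) : ℂ) / 16) •
    !![-1, 2 * Complex.I; 2 * Complex.I, 1]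

/-!
`Ψ` satisfies `Ψ' = Ψ·D` with the constant matrix `D = (1/4)·[[0, i],[−i, 0]]`, and
`det Ψ = i`, so `Ψ⁻¹Ψ' = D`. Likewise `U' = U/2` and `R₁' = −R₁/2`; then (ii) and (iii) are
`2 × 2` computations in which the exponentials cancel via `exp(t/2)·exp(−t/2) = 1`.
-/

lemma HasDerivAt.ofReal_exp_div {f : ℝ → ℝ} {f' t : ℝ} (hf : HasDerivAt f f' t) (c : ℝ) :
    HasDerivAt (fun s => ((Real.exp (f s) / c : ℝ) : ℂ)) (f' * ((Real.exp (f t) / c : ℝ) : ℂ)) t := by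
  simpa [mul_comm, mul_div_assoc] using ((hf.exp).div_const c).ofReal_comp

theorem Matrix.eq_of_hasDerivAt_apply {𝕜 E m n : Type*} [NontriviallyNormedField 𝕜]
    [NormedAddCommGroup E] [NormedSpace 𝕜 E] {F : 𝕜 → Matrix m n E} {A B : Matrix m n E} {t : 𝕜}
    (hA : ∀ i j, HasDerivAt (fun s => F s i j) (A i j) t)
    (hB : ∀ i j, HasDerivAt (fun s => F s i j) (B i j) t) : A = B :=
  Matrix.ext fun i j => (hA i j).unique (hB i j)

noncomputable def logDerivPsiM : Matrix (Fin 2) (Fin 2) ℂ := (1 / 4 : ℂ) • !![0, I; -I, 0]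

lemma hasDerivAt_PsiM_apply (t : ℝ) (i j : Fin 2) :
    HasDerivAt (fun s => PsiM s i j) ((PsiM t * logDerivPsiM) i j) t := by
  have hlinNeg : HasDerivAt (fun s : ℝ => -s / 4) (-1 / 4) t := by
    simpa using (hasDerivAt_neg t).div_const 4
  have hlinPos : HasDerivAt (fun s : ℝ => s / 4) (1 / 4) t := (hasDerivAt_id t).div_const 4
  have hneg := hlinNeg.ofReal_exp_div (Real.sqrt 2)
  have hpos := hlinPos.ofReal_exp_div (Real.sqrt 2)
  fin_cases i <;> fin_cases j <;>
    [refine hneg.congr_deriv ?_; refine (hneg.const_mul (-I)).congr_deriv ?_;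
     refine hpos.congr_deriv ?_; refine (hpos.const_mul I).congr_deriv ?_] <;>
    simp [PsiM, logDerivPsiM, Matrix.mul_apply, Fin.sum_univ_two] <;> grind [I_mul_I]

lemma det_PsiM (t : ℝ) : (PsiM t).det = I := by
  have hprod : ((Real.exp (-t / 4) / Real.sqrt 2 : ℝ) : ℂ) * ((Real.exp (t / 4) / Real.sqrt 2 : ℝ) : ℂ)
      = 1 / 2 := by
    rw [← ofReal_mul, div_mul_div_comm, ← Real.exp_add, Real.mul_self_sqrt zero_le_two]
    simp [neg_div]
  rw [PsiM, Matrix.det_fin_two_of]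
  linear_combination (2 * I) * hprod

lemma hasDerivAt_UM_apply (t : ℝ) (i j : Fin 2) :
    HasDerivAt (fun s => UM s i j) (((1 / 2 : ℂ) • UM t) i j) t := by
  have h : HasDerivAt (fun s : ℝ => ((2 * Real.exp (s / 2) : ℝ) : ℂ))
      ((1 / 2 : ℝ) * ((2 * Real.exp (t / 2) : ℝ) : ℂ)) t := by
    have hlin : HasDerivAt (fun s : ℝ => s / 2) (1 / 2) t := (hasDerivAt_id t).div_const 2
    refine ((hlin.exp.const_mul 2).ofReal_comp).congr_deriv ?_
    push_cast [-ofReal_exp]; ring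
  fin_cases i <;> fin_cases j <;>
    [refine h.congr_deriv ?_; refine (hasDerivAt_const t 0).congr_deriv ?_;
     refine (hasDerivAt_const t 0).congr_deriv ?_; refine h.neg.congr_deriv ?_] <;>
    simp [UM]

lemma hasDerivAt_R1M_apply (t : ℝ) (i j : Fin 2) :
    HasDerivAt (fun s => R1M s i j) (((-1 / 2 : ℂ) • R1M t) i j) t := by
  have h : HasDerivAt (fun s : ℝ => ((Real.exp (-s / 2) : ℝ) : ℂ) / 16)
      ((-1 / 2 : ℝ) * ((Real.exp (-t / 2) : ℝ) : ℂ) / 16) t := by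
    have hlin : HasDerivAt (fun s : ℝ => -s / 2) (-1 / 2) t := by
      simpa using (hasDerivAt_neg t).div_const 2
    refine ((hlin.exp.ofReal_comp).div_const 16).congr_deriv ?_
    push_cast [-ofReal_exp]; ring
  fin_cases i <;> fin_cases j <;>
    [refine (h.mul_const (-1)).congr_deriv ?_; refine (h.mul_const (2 * I)).congr_deriv ?_;
     refine (h.mul_const (2 * I)).congr_deriv ?_; refine (h.mul_const 1).congr_deriv ?_] <;>
    simp [R1M] <;> ring

lemma commutator_smul_UM_R1M (t : ℝ) :
    (1 / 2 : ℂ) • UM t * R1M t - R1M t * ((1 / 2 : ℂ) • UM t) = logDerivPsiM := by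
  have hexp : ((Real.exp (t / 2) : ℝ) : ℂ) * (Real.exp (-t / 2) : ℝ) = 1 := by
    rw [← ofReal_mul, ← Real.exp_add]; simp [neg_div]
  ext i j
  fin_cases i <;> fin_cases j <;>
    simp [-ofReal_exp, UM, R1M, logDerivPsiM] <;>
    grind

lemma smul_R1M_add_logDerivPsiM_mul_apply_self (t : ℝ) (i : Fin 2) :
    ((-1 / 2 : ℂ) • R1M t + logDerivPsiM * R1M t) i i = 0 := by
  fin_cases i <;> simp [R1M, logDerivPsiM] <;> grind [I_mul_I]

/-- With `Ψ'`, `U'`, `R₁'` the (entrywise) derivatives of `Ψ`, `U`, `R₁`, for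
all `t`: (i) `Ψ⁻¹·Ψ' = (1/4)·[[0,i],[−i,0]]`; (ii) `Ψ⁻¹·Ψ' = [U', R₁]`; and
(iii) the diagonal entries of `R₁' + Ψ⁻¹·Ψ'·R₁` vanish. -/
theorem stmt7 (Psi' U' R1' : ℝ → Matrix (Fin 2) (Fin 2) ℂ)
    (hPsi : ∀ (t : ℝ) (i j : Fin 2), HasDerivAt (fun s => PsiM s i j) (Psi' t i j) t)
    (hU : ∀ (t : ℝ) (i j : Fin 2), HasDerivAt (fun s => UM s i j) (U' t i j) t)
    (hR1 : ∀ (t : ℝ) (i j : Fin 2), HasDerivAt (fun s => R1M s i j) (R1' t i j) t) :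
    ∀ t : ℝ,
      (PsiM t)⁻¹ * Psi' t = (1 / 4 : ℂ) • !![0, Complex.I; -Complex.I, 0] ∧
      (PsiM t)⁻¹ * Psi' t = U' t * R1M t - R1M t * U' t ∧
      (R1' t + (PsiM t)⁻¹ * Psi' t * R1M t) 0 0 = 0 ∧
      (R1' t + (PsiM t)⁻¹ * Psi' t * R1M t) 1 1 = 0 := by
  intro t
  have hPsi' : Psi' t = PsiM t * logDerivPsiM :=
    Matrix.eq_of_hasDerivAt_apply (hPsi t) (hasDerivAt_PsiM_apply t)
  have hU' : U' t = (1 / 2 : ℂ) • UM t :=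
    Matrix.eq_of_hasDerivAt_apply (hU t) (hasDerivAt_UM_apply t)
  have hR1' : R1' t = (-1 / 2 : ℂ) • R1M t :=
    Matrix.eq_of_hasDerivAt_apply (hR1 t) (hasDerivAt_R1M_apply t)
  have hlog : (PsiM t)⁻¹ * Psi' t = logDerivPsiM := by
    rw [hPsi', ← Matrix.mul_assoc, Matrix.nonsing_inv_mul _ (by simp [det_PsiM]), Matrix.one_mul]
  rw [hlog, hU', hR1']
  exact ⟨rfl, (commutator_smul_UM_R1M t).symm, smul_R1M_add_logDerivPsiM_mul_apply_self t 0,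
    smul_R1M_add_logDerivPsiM_mul_apply_self t 1⟩
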